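/- With χ²_{I_1} and χ²_{I_2} independent chi-square variables and thresholds r_1², r_2² > 0, for every v ≥ 0: P[χ²_{I_1} > r_1² and χ²_{I_1} + χ²_{I_2} ≤ r_2²] ≤ e^{v r_2²} (1+2v)^{-(I_1+I_2)/2} · P[χ²_{I_1} > (1+2v) r_1²]. -/

import Mathlib

/-!
On the event, `1 ≤ exp (v * (r₂² - X - Y))`; multiplying in the indicator of `X > r₁²` and using
independence bounds the probability by `e^{v r₂²} E[e^{-vX}; X > r₁²] E[e^{-vY}]`.
Tilting a `Gamma(a, r)` law by `e^{-vx}` gives `(r / (r + v))^a` times a `Gamma(a, r + v)` law, and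
for `r = 1/2` the latter is the law of a `Gamma(a, 1/2)` variable divided by `1 + 2v`. Hence the
`X`-factor is `(1 + 2v)^{-I₁/2} P[X > (1 + 2v) r₁²]` and the `Y`-factor is `(1 + 2v)^{-I₂/2}`.
-/

open MeasureTheory ProbabilityTheory

/-- The chi-square distribution with `k` degrees of freedom, as the Gamma
distribution with shape `k/2` and rate `1/2`. -/
noncomputable def chiSquareMeasure (k : ℕ) : Measure ℝ :=
  gammaMeasure ((k : ℝ) / 2) (1 / 2)

open Set
open scoped ENNReal

lemma measurable_gammaPDF (a r : ℝ) : Measurable (gammaPDF a r) :=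
  (measurable_gammaPDFReal a r).ennreal_ofReal

lemma exp_neg_mul_mul_gammaPDFReal (a : ℝ) {r v : ℝ} (hr : 0 ≤ r) (hrv : 0 < r + v) (x : ℝ) :
    Real.exp (-(v * x)) * gammaPDFReal a r x = (r / (r + v)) ^ a * gammaPDFReal a (r + v) x := by
  unfold gammaPDFReal
  split_ifs
  · have hexp : Real.exp (-((r + v) * x)) = Real.exp (-(v * x)) * Real.exp (-(r * x)) := by
      rw [← Real.exp_add]; ring_nf
    rw [Real.div_rpow hr hrv.le, hexp]
    field_simp [(Real.rpow_pos_of_pos hrv a).ne']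
  · simp

lemma gammaPDFReal_mul_rate (a : ℝ) {r c : ℝ} (hr : 0 ≤ r) (hc : 0 < c) (x : ℝ) :
    gammaPDFReal a (c * r) x = c * gammaPDFReal a r (c * x) := by
  unfold gammaPDFReal
  by_cases hx : 0 ≤ x
  · rw [if_pos hx, if_pos (mul_nonneg hc.le hx), Real.mul_rpow hc.le hr,
      Real.mul_rpow hc.le hx, show c * r * x = r * (c * x) by ring,
      Real.rpow_sub_one hc.ne']
    field_simp
  · rw [if_neg hx, if_neg fun h => hx (nonneg_of_mul_nonneg_right h hc)]
    ring

lemma withDensity_exp_neg_mul_gammaMeasure (a : ℝ) {r v : ℝ} (hr : 0 ≤ r) (hrv : 0 < r + v) :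
    (gammaMeasure a r).withDensity (fun x => ENNReal.ofReal (Real.exp (-(v * x))))
      = ENNReal.ofReal ((r / (r + v)) ^ a) • gammaMeasure a (r + v) := by
  rw [gammaMeasure, ← withDensity_mul _ (measurable_gammaPDF a r) (by fun_prop), gammaMeasure,
    ← withDensity_smul _ (measurable_gammaPDF a _)]
  congr 1
  ext x
  simp only [Pi.mul_apply, Pi.smul_apply, smul_eq_mul, gammaPDF]
  rw [mul_comm, ← ENNReal.ofReal_mul (Real.exp_nonneg _), exp_neg_mul_mul_gammaPDFReal a hr hrv,
    ENNReal.ofReal_mul (Real.rpow_nonneg (div_nonneg hr hrv.le) _)]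

lemma gammaMeasure_mul_rate (a : ℝ) {r c : ℝ} (hr : 0 ≤ r) (hc : 0 < c) :
    gammaMeasure a (c * r) = (gammaMeasure a r).map (c⁻¹ * ·) := by
  ext s hs
  have hmul : Measurable (c⁻¹ * · : ℝ → ℝ) := measurable_const_mul _
  have hpdf : Measurable fun x => gammaPDF a r (c * x) :=
    (measurable_gammaPDF a r).comp (measurable_const_mul c)
  rw [Measure.map_apply hmul hs, gammaMeasure, gammaMeasure, withDensity_apply _ hs,
    withDensity_apply _ (hmul hs)]
  calc ∫⁻ x in s, gammaPDF a (c * r) x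
      = ∫⁻ x in s, gammaPDF a r (c * x) ∂(ENNReal.ofReal c • volume) := by
        simp only [gammaPDF, gammaPDFReal_mul_rate a hr hc, ENNReal.ofReal_mul hc.le,
          Measure.restrict_smul, lintegral_smul_measure, smul_eq_mul]
        exact lintegral_const_mul' _ _ ENNReal.ofReal_ne_top
    _ = ∫⁻ x in s, gammaPDF a r (c * x) ∂(volume.map (c⁻¹ * ·)) := by
        rw [Real.map_volume_mul_left (inv_ne_zero hc.ne'), inv_inv, abs_of_pos hc]
    _ = ∫⁻ y in (c⁻¹ * ·) ⁻¹' s, gammaPDF a r y := by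
        rw [setLIntegral_map hs hpdf hmul]
        simp only [mul_inv_cancel_left₀ hc.ne']

lemma setLIntegral_exp_neg_mul_gammaMeasure (a : ℝ) {r v : ℝ} (hr : 0 ≤ r) (hrv : 0 < r + v)
    {s : Set ℝ} (hs : MeasurableSet s) :
    ∫⁻ x in s, ENNReal.ofReal (Real.exp (-(v * x))) ∂gammaMeasure a r
      = ENNReal.ofReal ((r / (r + v)) ^ a) * gammaMeasure a (r + v) s := by
  rw [← withDensity_apply _ hs, withDensity_exp_neg_mul_gammaMeasure a hr hrv, Measure.smul_apply,
    smul_eq_mul]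

lemma lintegral_exp_neg_mul_gammaMeasure {a : ℝ} (ha : 0 < a) {r v : ℝ} (hr : 0 ≤ r)
    (hrv : 0 < r + v) :
    ∫⁻ x, ENNReal.ofReal (Real.exp (-(v * x))) ∂gammaMeasure a r
      = ENNReal.ofReal ((r / (r + v)) ^ a) := by
  have := isProbabilityMeasure_gammaMeasure ha hrv
  simpa using setLIntegral_exp_neg_mul_gammaMeasure a hr hrv MeasurableSet.univ

lemma chiSquare_tilt_factor (a : ℝ) {v : ℝ} (hv : 0 < 1 + 2 * v) :
    ((1 / 2 : ℝ) / (1 / 2 + v)) ^ a = (1 + 2 * v) ^ (-a) := by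
  rw [show (1 / 2 : ℝ) / (1 / 2 + v) = (1 + 2 * v)⁻¹ by field_simp, Real.inv_rpow hv.le,
    Real.rpow_neg hv.le]

lemma chiSquareMeasure_setLIntegral_exp_neg_mul_Ioi (k : ℕ) {v : ℝ} (hv : 0 < 1 + 2 * v)
    (s : ℝ) :
    ∫⁻ x in Ioi s, ENNReal.ofReal (Real.exp (-(v * x))) ∂chiSquareMeasure k
      = ENNReal.ofReal ((1 + 2 * v) ^ (-((k : ℝ) / 2)))
        * chiSquareMeasure k (Ioi ((1 + 2 * v) * s)) := by
  rw [chiSquareMeasure, setLIntegral_exp_neg_mul_gammaMeasure _ (by norm_num) (by linarith)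
      measurableSet_Ioi, chiSquare_tilt_factor _ hv,
    show (1 / 2 : ℝ) + v = (1 + 2 * v) * (1 / 2) by ring, gammaMeasure_mul_rate _ (by norm_num) hv,
    Measure.map_apply (measurable_const_mul _) measurableSet_Ioi,
    preimage_const_mul_Ioi₀ _ (inv_pos.2 hv), div_inv_eq_mul, mul_comm s]

lemma chiSquareMeasure_lintegral_exp_neg_mul {k : ℕ} (hk : 0 < k) {v : ℝ} (hv : 0 < 1 + 2 * v) :
    ∫⁻ x, ENNReal.ofReal (Real.exp (-(v * x))) ∂chiSquareMeasure k
      = ENNReal.ofReal ((1 + 2 * v) ^ (-((k : ℝ) / 2))) := by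
  rw [chiSquareMeasure, lintegral_exp_neg_mul_gammaMeasure (by positivity) (by norm_num)
    (by linarith), chiSquare_tilt_factor _ hv]

lemma measure_lt_and_add_le_le_of_indepFun {Ω : Type*} [MeasurableSpace Ω] {μ : Measure Ω}
    {X Y : Ω → ℝ} (hX : Measurable X) (hY : Measurable Y) (hXY : IndepFun X Y μ)
    {v : ℝ} (hv : 0 ≤ v) (s t : ℝ) :
    μ {ω | s < X ω ∧ X ω + Y ω ≤ t}
      ≤ ENNReal.ofReal (Real.exp (v * t))
        * (∫⁻ x in Ioi s, ENNReal.ofReal (Real.exp (-(v * x))) ∂μ.map X)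
        * ∫⁻ y, ENNReal.ofReal (Real.exp (-(v * y))) ∂μ.map Y := by
  set e : ℝ → ℝ≥0∞ := fun x => ENNReal.ofReal (Real.exp (-(v * x)))
  have he : Measurable e := by fun_prop
  have hf : Measurable ((Ioi s).indicator e) := he.indicator measurableSet_Ioi
  set E : Set Ω := {ω | s < X ω ∧ X ω + Y ω ≤ t}
  have hE : MeasurableSet E :=
    (measurableSet_lt measurable_const hX).inter (measurableSet_le (hX.add hY) measurable_const)
  have chernoff : ∀ ω, E.indicator 1 ω
      ≤ ENNReal.ofReal (Real.exp (v * t)) * ((Ioi s).indicator e (X ω) * e (Y ω)) := by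
    intro ω
    by_cases hω : ω ∈ E
    · rw [indicator_of_mem hω, indicator_of_mem (show X ω ∈ Ioi s from hω.1), Pi.one_apply,
        ← ENNReal.ofReal_mul (Real.exp_nonneg _), ← Real.exp_add,
        ← ENNReal.ofReal_mul (Real.exp_nonneg _), ← Real.exp_add]
      exact ENNReal.one_le_ofReal.2 (Real.one_le_exp (by nlinarith [hω.2]))
    · rw [indicator_of_notMem hω]
      exact zero_le
  calc μ E
      = ∫⁻ ω, E.indicator 1 ω ∂μ := (lintegral_indicator_one hE).symm
    _ ≤ ∫⁻ ω, ENNReal.ofReal (Real.exp (v * t)) * ((Ioi s).indicator e (X ω) * e (Y ω)) ∂μ :=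
        lintegral_mono chernoff
    _ = ENNReal.ofReal (Real.exp (v * t))
          * ((∫⁻ ω, (Ioi s).indicator e (X ω) ∂μ) * ∫⁻ ω, e (Y ω) ∂μ) := by
        rw [lintegral_const_mul' _ _ ENNReal.ofReal_ne_top]
        exact congrArg _ <| lintegral_mul_eq_lintegral_mul_lintegral_of_indepFun''
          (hf.comp hX).aemeasurable (he.comp hY).aemeasurable (hXY.comp hf he)
    _ = _ := by
        rw [← lintegral_map hf hX, ← lintegral_map he hY, lintegral_indicator measurableSet_Ioi,
          mul_assoc]

theorem chiSquare_tail_lowerTail_chernoff_general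
    {Ω : Type*} [MeasurableSpace Ω] (μ : Measure Ω) [IsProbabilityMeasure μ]
    (I₁ I₂ : ℕ) (hI₂ : 0 < I₂)
    (X Y : Ω → ℝ) (hX : Measurable X) (hY : Measurable Y)
    (hXY : IndepFun X Y μ)
    (hXlaw : μ.map X = chiSquareMeasure I₁) (hYlaw : μ.map Y = chiSquareMeasure I₂)
    (r₁sq r₂sq : ℝ)
    (v : ℝ) (hv : 0 ≤ v) :
    (μ {ω | r₁sq < X ω ∧ X ω + Y ω ≤ r₂sq}).toReal
      ≤ Real.exp (v * r₂sq) * (1 + 2 * v) ^ (-((I₁ + I₂ : ℝ)) / 2) *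
        (μ {ω | (1 + 2 * v) * r₁sq < X ω}).toReal := by
  have hc : 0 < 1 + 2 * v := by linarith
  have htail : μ.map X (Ioi ((1 + 2 * v) * r₁sq)) = μ {ω | (1 + 2 * v) * r₁sq < X ω} :=
    Measure.map_apply hX measurableSet_Ioi
  have key := measure_lt_and_add_le_le_of_indepFun hX hY hXY hv r₁sq r₂sq
  rw [hXlaw, hYlaw, chiSquareMeasure_setLIntegral_exp_neg_mul_Ioi I₁ hc,
    chiSquareMeasure_lintegral_exp_neg_mul hI₂ hc, ← hXlaw, htail] at key
  have hpow : (1 + 2 * v) ^ (-((I₁ + I₂ : ℝ)) / 2)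
      = (1 + 2 * v) ^ (-((I₁ : ℝ) / 2)) * (1 + 2 * v) ^ (-((I₂ : ℝ) / 2)) := by
    rw [← Real.rpow_add hc]; ring_nf
  calc (μ {ω | r₁sq < X ω ∧ X ω + Y ω ≤ r₂sq}).toReal
      ≤ (ENNReal.ofReal (Real.exp (v * r₂sq))
          * (ENNReal.ofReal ((1 + 2 * v) ^ (-((I₁ : ℝ) / 2))) * μ {ω | (1 + 2 * v) * r₁sq < X ω})
          * ENNReal.ofReal ((1 + 2 * v) ^ (-((I₂ : ℝ) / 2)))).toReal :=
        ENNReal.toReal_mono (by finiteness) key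
    _ = _ := by
        simp only [ENNReal.toReal_mul, ENNReal.toReal_ofReal (Real.exp_nonneg _),
          ENNReal.toReal_ofReal (Real.rpow_nonneg hc.le _), hpow]
        ring

/-- Lower-tail Chernoff bound: for v ≥ 0,
P[χ²_{I₁} > r₁² ∧ χ²_{I₁} + χ²_{I₂} ≤ r₂²]
  ≤ e^{v r₂²} (1+2v)^{-(I₁+I₂)/2} P[χ²_{I₁} > (1+2v) r₁²]. -/
theorem chiSquare_tail_lowerTail_chernoff
    {Ω : Type*} [MeasurableSpace Ω] (μ : Measure Ω) [IsProbabilityMeasure μ]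
    (I₁ I₂ : ℕ) (hI₁ : 0 < I₁) (hI₂ : 0 < I₂)
    (X Y : Ω → ℝ) (hX : Measurable X) (hY : Measurable Y)
    (hXY : IndepFun X Y μ)
    (hXlaw : μ.map X = chiSquareMeasure I₁) (hYlaw : μ.map Y = chiSquareMeasure I₂)
    (r₁sq r₂sq : ℝ) (hr₁ : 0 < r₁sq) (hr₂ : 0 < r₂sq)
    (v : ℝ) (hv : 0 ≤ v) :
    (μ {ω | r₁sq < X ω ∧ X ω + Y ω ≤ r₂sq}).toReal
      ≤ Real.exp (v * r₂sq) * (1 + 2 * v) ^ (-((I₁ + I₂ : ℝ)) / 2) *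
        (μ {ω | (1 + 2 * v) * r₁sq < X ω}).toReal :=
  chiSquare_tail_lowerTail_chernoff_general μ I₁ I₂ hI₂ X Y hX hY hXY hXlaw hYlaw r₁sq r₂sq v hv
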